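/- Let ψ = (ψ₁, ψ₂) : ℝ² → ℝ² be a C¹ diffeomorphism with Jacobian J_ψ. Let p₁, p̃₁, q₁, q̃₁, p̃₂, q̃₂ : ℝ → (0, ∞) be continuously differentiable strictly positive probability densities, and let p₂, q₂ : ℝ × ℝ → (0, ∞) be continuously differentiable strictly positive conditional densities, i.e., ∫ p₂(v₁, v₂) dv₂ = 1 for every v₁ and ∫ q₂(z₁, z₂) dz₂ = 1 for every z₁. Assume the derivative of the mechanism ratio is nowhere zero: (p̃₁/p₁)'(v₁) ≠ 0 for every v₁ ∈ ℝ. Suppose the following three change-of-variable identities (corresponding to an observational environment and one perfect intervention on each node, with aligned intervention targets) hold for all z = (z₁, z₂) ∈ ℝ²: (1) q₁(z₁)·q₂(z₁, z₂) = p₁(ψ₁(z))·p₂(ψ₁(z), ψ₂(z))·|det J_ψ(z)|; (2) q̃₁(z₁)·q₂(z₁, z₂) = p̃₁(ψ₁(z))·p₂(ψ₁(z), ψ₂(z))·|det J_ψ(z)|; (3) q₁(z₁)·q̃₂(z₂) = p₁(ψ₁(z))·p̃₂(ψ₂(z))·|det J_ψ(z)|. Then ψ is an elementwise map: ∂ψ₁/∂z₂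 (z) = 0 and ∂ψ₂/∂z₁ (z) = 0 for all z, so there exist functions φ₁, φ₂ : ℝ → ℝ with ψ(z₁, z₂) = (φ₁(z₁), φ₂(z₂)) for all (z₁, z₂). -/

import Mathlib

open MeasureTheory

/-- The Jacobian matrix of `ψ : ℝⁿ → ℝⁿ` at `z`: `(J_ψ(z))_{ij} = ∂ψ_i/∂z_j (z)`. -/
noncomputable def jacobian {n : ℕ} (ψ : (Fin n → ℝ) → (Fin n → ℝ)) (z : Fin n → ℝ) :
    Matrix (Fin n) (Fin n) ℝ :=
  Matrix.of fun i j => fderiv ℝ ψ z (Pi.single j 1) i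

open Set Function

/-- A continuous function on ℝ whose `deriv` never vanishes is injective (Rolle). -/
lemma inj_of_deriv_ne_zero {f : ℝ → ℝ} (hc : Continuous f) (hd : ∀ x, deriv f x ≠ 0) :
    Function.Injective f := by
  intro a b hab
  by_contra hne
  rcases lt_or_gt_of_ne hne with h | h
  · obtain ⟨c, _, hc0⟩ := exists_deriv_eq_zero h (hc.continuousOn) hab
    exact hd c hc0
  · obtain ⟨c, _, hc0⟩ := exists_deriv_eq_zero h (hc.continuousOn) hab.symm
    exact hd c hc0

/-- Derivative of a coordinate of `ψ` along a line. -/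
lemma line_hasDerivAt {ψ : (Fin 2 → ℝ) → (Fin 2 → ℝ)} (hψ : Differentiable ℝ ψ)
    (c w : Fin 2 → ℝ) (i : Fin 2) (t : ℝ) :
    HasDerivAt (fun s : ℝ => ψ (c + s • w) i)
      (fderiv ℝ ψ (c + t • w) w i) t := by
  have hline : HasDerivAt (fun s : ℝ => c + s • w) w t := by
    simpa using ((hasDerivAt_id t).smul_const w).const_add c
  have h1 : HasDerivAt (fun s : ℝ => ψ (c + s • w)) (fderiv ℝ ψ (c + t • w) w) t :=
    (hψ (c + t • w)).hasFDerivAt.comp_hasDerivAt t hline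
  have h2 := (ContinuousLinearMap.proj (R := ℝ) (φ := fun _ : Fin 2 => ℝ) i).hasFDerivAt
    |>.comp_hasDerivAt t h1
  exact h2

/-- If a coordinate of `ψ` is constant along a line, the directional derivative vanishes. -/
lemma dir_deriv_zero {ψ : (Fin 2 → ℝ) → (Fin 2 → ℝ)} (hψ : Differentiable ℝ ψ)
    (z w : Fin 2 → ℝ) (i : Fin 2) (cst : ℝ)
    (hconst : ∀ t : ℝ, ψ (z + t • w) i = cst) :
    fderiv ℝ ψ z w i = 0 := by
  have h1 := line_hasDerivAt hψ z w i 0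
  rw [show z + (0:ℝ) • w = z by simp] at h1
  have h2 : HasDerivAt (fun _ : ℝ => cst) (fderiv ℝ ψ z w i) 0 := by
    refine h1.congr_of_eventuallyEq ?_
    filter_upwards with t using (hconst t).symm
  have := h2.unique (hasDerivAt_const 0 cst)
  simpa using this

/-- If `ψ z i = φ (z j)` globally, the `(i,j)` partial only depends on `z j`. -/
lemma coord_fderiv_eq {ψ : (Fin 2 → ℝ) → (Fin 2 → ℝ)} (hψ : Differentiable ℝ ψ)
    {φ : ℝ → ℝ} {i j : Fin 2} (hrep : ∀ z, ψ z i = φ (z j))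
    {z z' : Fin 2 → ℝ} (hjj : z j = z' j) :
    fderiv ℝ ψ z (Pi.single j 1) i = fderiv ℝ ψ z' (Pi.single j 1) i := by
  have H : ∀ y : Fin 2 → ℝ,
      HasDerivAt (fun s : ℝ => φ (y j + s)) (fderiv ℝ ψ y (Pi.single j 1) i) 0 := by
    intro y
    have h := line_hasDerivAt hψ y (Pi.single j 1) i 0
    rw [show y + (0:ℝ) • (Pi.single j 1 : Fin 2 → ℝ) = y by simp] at h
    refine h.congr_of_eventuallyEq ?_
    filter_upwards with s
    rw [hrep]
    congr 1
    simp
  have h1 := H z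
  have h2 := H z'
  rw [hjj] at h1
  exact h1.unique h2

/-- A nowhere-vanishing continuous real function on ℝ² has constant sign. -/
lemma sign_const {f : (Fin 2 → ℝ) → ℝ} (hc : Continuous f) (hne : ∀ z, f z ≠ 0) :
    (∀ z, 0 < f z) ∨ (∀ z, f z < 0) := by
  by_contra h
  push_neg at h
  obtain ⟨⟨a, ha⟩, ⟨b, hb⟩⟩ := h
  have ha' : f a < 0 := lt_of_le_of_ne ha (hne a)
  have hb' : 0 < f b := lt_of_le_of_ne hb (Ne.symm (hne b))
  have hseg : Continuous fun t : ℝ => f (a + t • (b - a)) := by fun_prop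
  have hmem : (0:ℝ) ∈ Set.Icc (f (a + (0:ℝ) • (b-a))) (f (a + (1:ℝ) • (b-a))) := by
    simp only [zero_smul, add_zero, one_smul]
    exact ⟨by simpa using ha'.le, by simpa using hb'.le⟩
  obtain ⟨t, _, ht⟩ := intermediate_value_Icc (le_of_lt zero_lt_one) hseg.continuousOn hmem
  exact hne _ ht

lemma image_Iic_of_strictMono {f : ℝ → ℝ} (hm : StrictMono f) (hs : Surjective f) (a : ℝ) :
    f '' Set.Iic a = Set.Iic (f a) := by
  ext x
  constructor
  · rintro ⟨y, hy, rfl⟩; exact hm.monotone hy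
  · intro hx
    obtain ⟨y, rfl⟩ := hs x
    exact ⟨y, (hm.le_iff_le).1 hx, rfl⟩

lemma image_Ici_of_strictAnti {f : ℝ → ℝ} (hm : StrictAnti f) (hs : Surjective f) (a : ℝ) :
    f '' Set.Ici a = Set.Iic (f a) := by
  ext x
  constructor
  · rintro ⟨y, hy, rfl⟩; exact hm.antitone hy
  · intro hx
    obtain ⟨y, rfl⟩ := hs x
    exact ⟨y, (hm.le_iff_ge).1 hx, rfl⟩

lemma jacobian_det_eq {n : ℕ} (ψ : (Fin n → ℝ) → (Fin n → ℝ)) (z : Fin n → ℝ) :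
    (jacobian ψ z).det = LinearMap.det (fderiv ℝ ψ z : (Fin n → ℝ) →ₗ[ℝ] (Fin n → ℝ)) := by
  rw [← LinearMap.det_toMatrix (Pi.basisFun ℝ (Fin n))]
  congr 1

lemma jacobian_det_ne_zero {ψ ψinv : (Fin 2 → ℝ) → (Fin 2 → ℝ)}
    (hψ : Differentiable ℝ ψ) (hψinv : Differentiable ℝ ψinv)
    (hli : Function.LeftInverse ψinv ψ) (z : Fin 2 → ℝ) :
    (jacobian ψ z).det ≠ 0 := by
  rw [jacobian_det_eq]
  have hcomp : HasFDerivAt (ψinv ∘ ψ)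
      ((fderiv ℝ ψinv (ψ z)).comp (fderiv ℝ ψ z)) z :=
    (hψinv (ψ z)).hasFDerivAt.comp z (hψ z).hasFDerivAt
  have hid : HasFDerivAt (ψinv ∘ ψ) (ContinuousLinearMap.id ℝ (Fin 2 → ℝ)) z := by
    have : ψinv ∘ ψ = id := funext hli
    rw [this]; exact hasFDerivAt_id z
  have heq := hcomp.unique hid
  have hdet : LinearMap.det ((fderiv ℝ ψinv (ψ z) : (Fin 2 → ℝ) →ₗ[ℝ] _).comp
      (fderiv ℝ ψ z : (Fin 2 → ℝ) →ₗ[ℝ] _)) = 1 := by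
    have : ((fderiv ℝ ψinv (ψ z)).comp (fderiv ℝ ψ z) :
        (Fin 2 → ℝ) →ₗ[ℝ] (Fin 2 → ℝ)) = LinearMap.id := by
      rw [heq]; rfl
    rw [← ContinuousLinearMap.toLinearMap_comp, this, LinearMap.det_id]
  rw [LinearMap.det_comp] at hdet
  intro h
  rw [h, mul_zero] at hdet
  exact zero_ne_one hdet

/-- **Bivariate identifiability, aligned intervention targets (Case 1 of Theorem 5.2).**
Let `ψ : ℝ² → ℝ²` be a `C¹` diffeomorphism relating true latents `V = ψ(Z)` to inferred
latents, let `p₁, p̃₁, q₁, q̃₁, p̃₂, q̃₂` be strictly positive `C¹` densities and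
`p₂, q₂` strictly positive `C¹` conditional densities, with `(p̃₁/p₁)' ≠ 0` everywhere.
If the three change-of-variable identities corresponding to an observational environment
and one perfect intervention on each node (with aligned targets) hold, then `ψ` is an
elementwise map: `∂ψ₁/∂z₂ ≡ 0`, `∂ψ₂/∂z₁ ≡ 0`, and `ψ(z₁,z₂) = (φ₁(z₁), φ₂(z₂))`. -/
theorem bivariate_aligned_elementwise
    (ψ ψinv : (Fin 2 → ℝ) → (Fin 2 → ℝ))
    (hψC : ContDiff ℝ 1 ψ) (hψinvC : ContDiff ℝ 1 ψinv)
    (hψli : Function.LeftInverse ψinv ψ) (hψri : Function.RightInverse ψinv ψ)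
    (p₁ pt₁ q₁ qt₁ pt₂ qt₂ : ℝ → ℝ) (p₂ q₂ : ℝ → ℝ → ℝ)
    -- continuous differentiability
    (hp₁C : ContDiff ℝ 1 p₁) (hpt₁C : ContDiff ℝ 1 pt₁)
    (hq₁C : ContDiff ℝ 1 q₁) (hqt₁C : ContDiff ℝ 1 qt₁)
    (hpt₂C : ContDiff ℝ 1 pt₂) (hqt₂C : ContDiff ℝ 1 qt₂)
    (hp₂C : ContDiff ℝ 1 fun v : ℝ × ℝ => p₂ v.1 v.2)
    (hq₂C : ContDiff ℝ 1 fun v : ℝ × ℝ => q₂ v.1 v.2)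
    -- strict positivity
    (hp₁pos : ∀ x, 0 < p₁ x) (hpt₁pos : ∀ x, 0 < pt₁ x)
    (hq₁pos : ∀ x, 0 < q₁ x) (hqt₁pos : ∀ x, 0 < qt₁ x)
    (hpt₂pos : ∀ x, 0 < pt₂ x) (hqt₂pos : ∀ x, 0 < qt₂ x)
    (hp₂pos : ∀ v₁ v₂, 0 < p₂ v₁ v₂) (hq₂pos : ∀ z₁ z₂, 0 < q₂ z₁ z₂)
    -- normalisation
    (hp₁int : ∫ x, p₁ x = 1) (hpt₁int : ∫ x, pt₁ x = 1)
    (hq₁int : ∫ x, q₁ x = 1) (hqt₁int : ∫ x, qt₁ x = 1)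
    (hpt₂int : ∫ x, pt₂ x = 1) (hqt₂int : ∫ x, qt₂ x = 1)
    (hp₂int : ∀ v₁, ∫ v₂, p₂ v₁ v₂ = 1) (hq₂int : ∀ z₁, ∫ z₂, q₂ z₁ z₂ = 1)
    -- the intervened mechanism differs from the base mechanism everywhere (A3)
    (hratio : ∀ v₁ : ℝ, deriv (fun v => pt₁ v / p₁ v) v₁ ≠ 0)
    -- change-of-variable identities: observational and two interventional environments
    (h0 : ∀ z : Fin 2 → ℝ,
      q₁ (z 0) * q₂ (z 0) (z 1) =
        p₁ (ψ z 0) * p₂ (ψ z 0) (ψ z 1) * |(jacobian ψ z).det|)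
    (h1 : ∀ z : Fin 2 → ℝ,
      qt₁ (z 0) * q₂ (z 0) (z 1) =
        pt₁ (ψ z 0) * p₂ (ψ z 0) (ψ z 1) * |(jacobian ψ z).det|)
    (h2 : ∀ z : Fin 2 → ℝ,
      q₁ (z 0) * qt₂ (z 1) =
        p₁ (ψ z 0) * pt₂ (ψ z 1) * |(jacobian ψ z).det|) :
    (∀ z : Fin 2 → ℝ,
      fderiv ℝ ψ z (Pi.single 1 1) 0 = 0 ∧ fderiv ℝ ψ z (Pi.single 0 1) 1 = 0) ∧
    ∃ φ₁ φ₂ : ℝ → ℝ, ∀ z : Fin 2 → ℝ, ψ z 0 = φ₁ (z 0) ∧ ψ z 1 = φ₂ (z 1) := by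
  have hψd : Differentiable ℝ ψ := hψC.differentiable one_ne_zero
  have hψinvd : Differentiable ℝ ψinv := hψinvC.differentiable one_ne_zero
  have hdet : ∀ z, (jacobian ψ z).det ≠ 0 := jacobian_det_ne_zero hψd hψinvd hψli
  have habs : ∀ z, 0 < |(jacobian ψ z).det| := fun z => abs_pos.2 (hdet z)
  -- Step A: first coordinate of ψ only depends on z 0
  have hginj : Function.Injective (fun v => pt₁ v / p₁ v) :=
    inj_of_deriv_ne_zero
      (hpt₁C.continuous.div hp₁C.continuous fun x => (hp₁pos x).ne') hratio
  have hkey : ∀ z : Fin 2 → ℝ, pt₁ (ψ z 0) / p₁ (ψ z 0) = qt₁ (z 0) / q₁ (z 0) := by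
    intro z
    have e0 := h0 z
    have e1 := h1 z
    have hQ : (0:ℝ) < q₂ (z 0) (z 1) := hq₂pos _ _
    have hcross : pt₁ (ψ z 0) * q₁ (z 0) = qt₁ (z 0) * p₁ (ψ z 0) := by
      apply mul_right_cancel₀ (ne_of_gt hQ)
      linear_combination pt₁ (ψ z 0) * e0 - p₁ (ψ z 0) * e1
    rw [div_eq_div_iff (hp₁pos _).ne' (hq₁pos _).ne']
    linarith [hcross]
  set φ₁ : ℝ → ℝ := fun t => ψ ![t, 0] 0 with hφ₁def
  have hψ1rep : ∀ z : Fin 2 → ℝ, ψ z 0 = φ₁ (z 0) := by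
    intro z
    have h1' := hkey z
    have h2' := hkey ![z 0, 0]
    simp only [Matrix.cons_val_zero] at h2'
    apply hginj
    show pt₁ (ψ z 0) / p₁ (ψ z 0) = pt₁ (φ₁ (z 0)) / p₁ (φ₁ (z 0))
    rw [h1', hφ₁def, ← h2']
  have hd01 : ∀ z : Fin 2 → ℝ, fderiv ℝ ψ z (Pi.single 1 1) 0 = 0 := by
    intro z
    apply dir_deriv_zero hψd z _ 0 (φ₁ (z 0))
    intro t
    rw [hψ1rep]
    congr 1
    simp
  -- determinant factorisation
  have hdet2 : ∀ z : Fin 2 → ℝ, (jacobian ψ z).det =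
      fderiv ℝ ψ z (Pi.single 0 1) 0 * fderiv ℝ ψ z (Pi.single 1 1) 1 := by
    intro z
    simp [jacobian, Matrix.det_fin_two, hd01 z]
  have hA_ne : ∀ z : Fin 2 → ℝ, fderiv ℝ ψ z (Pi.single 0 1) 0 ≠ 0 := by
    intro z h
    exact hdet z (by rw [hdet2 z, h, zero_mul])
  have hD_ne : ∀ z : Fin 2 → ℝ, fderiv ℝ ψ z (Pi.single 1 1) 1 ≠ 0 := by
    intro z h
    exact hdet z (by rw [hdet2 z, h, mul_zero])
  -- φ₁ is differentiable with nonvanishing derivative, hence injective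
  have hline0 : ∀ s : ℝ, (0 : Fin 2 → ℝ) + s • (Pi.single 0 1 : Fin 2 → ℝ) = ![s, 0] := by
    intro s; funext i; fin_cases i <;> simp
  have hφ₁deriv : ∀ t : ℝ, HasDerivAt φ₁ (fderiv ℝ ψ ![t, 0] (Pi.single 0 1) 0) t := by
    intro t
    have h := line_hasDerivAt hψd 0 (Pi.single 0 1) 0 t
    rw [hline0 t] at h
    refine h.congr_of_eventuallyEq ?_
    filter_upwards with s
    rw [hφ₁def]
    simp only
    rw [hline0 s]
  have hφ₁inj : Function.Injective φ₁ := by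
    apply inj_of_deriv_ne_zero
    · exact continuous_iff_continuousAt.2 fun t => ((hφ₁deriv t).differentiableAt).continuousAt
    · intro t; rw [(hφ₁deriv t).deriv]; exact hA_ne _
  -- vertical sections of ψ₂
  have hline1 : ∀ z₁ s : ℝ,
      (![z₁, 0] : Fin 2 → ℝ) + s • (Pi.single 1 1 : Fin 2 → ℝ) = ![z₁, s] := by
    intro z₁ s; funext i; fin_cases i <;> simp
  have hh : ∀ z₁ t : ℝ, HasDerivAt (fun s => ψ ![z₁, s] 1)
      (fderiv ℝ ψ ![z₁, t] (Pi.single 1 1) 1) t := by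
    intro z₁ t
    have h := line_hasDerivAt hψd ![z₁, 0] (Pi.single 1 1) 1 t
    rw [hline1 z₁ t] at h
    refine h.congr_of_eventuallyEq ?_
    filter_upwards with s
    rw [hline1 z₁ s]
  have hhinj : ∀ z₁ : ℝ, Function.Injective (fun s => ψ ![z₁, s] 1) := by
    intro z₁
    apply inj_of_deriv_ne_zero
    · exact continuous_iff_continuousAt.2 fun t => ((hh z₁ t).differentiableAt).continuousAt
    · intro t; rw [(hh z₁ t).deriv]; exact hD_ne _
  have hhsurj : ∀ z₁ : ℝ, Function.Surjective (fun s => ψ ![z₁, s] 1) := by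
    intro z₁ v₂
    have hz' : ψ (ψinv ![φ₁ z₁, v₂]) = ![φ₁ z₁, v₂] := hψri _
    have h00 : φ₁ (ψinv ![φ₁ z₁, v₂] 0) = φ₁ z₁ := by
      rw [← hψ1rep (ψinv ![φ₁ z₁, v₂]), hz']; simp
    have hz0 : ψinv ![φ₁ z₁, v₂] 0 = z₁ := hφ₁inj h00
    refine ⟨ψinv ![φ₁ z₁, v₂] 1, ?_⟩
    have hzz : (![z₁, ψinv ![φ₁ z₁, v₂] 1] : Fin 2 → ℝ) = ψinv ![φ₁ z₁, v₂] := by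
      funext i; fin_cases i
      · simp [hz0]
      · simp
    show ψ ![z₁, ψinv ![φ₁ z₁, v₂] 1] 1 = v₂
    rw [hzz, hz']; simp
  -- the key density identity for the second coordinate
  have hstar : ∀ z₁ z₂ : ℝ,
      pt₂ (ψ ![z₁, z₂] 1) * |fderiv ℝ ψ ![z₁, z₂] (Pi.single 1 1) 1| = qt₂ z₂ := by
    intro z₁
    have hAeq : ∀ t : ℝ, fderiv ℝ ψ ![z₁, t] (Pi.single 0 1) 0
        = fderiv ℝ ψ ![z₁, 0] (Pi.single 0 1) 0 := by
      intro t
      exact coord_fderiv_eq hψd hψ1rep (by simp)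
    set c : ℝ := q₁ z₁ / (p₁ (φ₁ z₁) * |fderiv ℝ ψ ![z₁, 0] (Pi.single 0 1) 0|) with hc
    have hPpos : 0 < p₁ (φ₁ z₁) * |fderiv ℝ ψ ![z₁, 0] (Pi.single 0 1) 0| :=
      mul_pos (hp₁pos _) (abs_pos.2 (hA_ne _))
    have hptw : ∀ t : ℝ,
        pt₂ (ψ ![z₁, t] 1) * |fderiv ℝ ψ ![z₁, t] (Pi.single 1 1) 1| = c * qt₂ t := by
      intro t
      have e2 := h2 ![z₁, t]
      simp only [Matrix.cons_val_zero, Matrix.cons_val_one, Matrix.head_cons] at e2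
      rw [hdet2, abs_mul, hAeq t, hψ1rep ![z₁, t]] at e2
      simp only [Matrix.cons_val_zero] at e2
      rw [hc, div_mul_eq_mul_div, eq_div_iff hPpos.ne']
      first
      | linear_combination -e2
      | linear_combination e2
    have hCV := integral_image_eq_integral_abs_deriv_smul (MeasurableSet.univ)
      (fun x (_ : x ∈ Set.univ) => (hh z₁ x).hasDerivWithinAt) ((hhinj z₁).injOn) pt₂
    have himg : (fun s => ψ ![z₁, s] 1) '' Set.univ = Set.univ := by
      rw [image_univ]; exact (hhsurj z₁).range_eq
    rw [himg, setIntegral_univ, setIntegral_univ, hpt₂int] at hCV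
    have hc1 : c = 1 := by
      have hfe : (fun x => |fderiv ℝ ψ ![z₁, x] (Pi.single 1 1) 1| • pt₂ (ψ ![z₁, x] 1))
          = fun x => c * qt₂ x := by
        funext x; rw [smul_eq_mul, mul_comm]; exact hptw x
      rw [hfe, integral_const_mul, hqt₂int, mul_one] at hCV
      exact hCV.symm
    intro z₂
    rw [hptw z₂, hc1, one_mul]
  -- continuity and constant sign of ∂ψ₂/∂z₂
  have hDcont : Continuous fun z : Fin 2 → ℝ => fderiv ℝ ψ z (Pi.single 1 1) 1 := by
    have h1 : Continuous fun z => fderiv ℝ ψ z := hψC.continuous_fderiv one_ne_zero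
    exact (continuous_apply (1 : Fin 2)).comp (h1.clm_apply continuous_const)
  -- the CDF of pt₂ is strictly monotone
  have hpt₂I : Integrable pt₂ := by
    by_contra hcon
    rw [integral_undef hcon] at hpt₂int
    norm_num at hpt₂int
  set G : ℝ → ℝ := fun t => ∫ x in Set.Iic t, pt₂ x with hGdef
  have hGmono : StrictMono G := by
    intro a b hab
    have hpos : 0 < ∫ x in Set.Ioc a b, pt₂ x := by
      rw [setIntegral_pos_iff_support_of_nonneg_ae
        (Filter.Eventually.of_forall fun x => (hpt₂pos x).le) hpt₂I.integrableOn]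
      have hsupp : Function.support pt₂ ∩ Set.Ioc a b = Set.Ioc a b :=
        Set.inter_eq_right.2 fun x _ => (hpt₂pos x).ne'
      rw [hsupp, Real.volume_Ioc]
      exact ENNReal.ofReal_pos.2 (sub_pos.2 hab)
    have hsplit : G b = G a + ∫ x in Set.Ioc a b, pt₂ x := by
      rw [hGdef]
      simp only
      rw [← Set.Iic_union_Ioc_eq_Iic hab.le,
        setIntegral_union (Set.Iic_disjoint_Ioc le_rfl) measurableSet_Ioc
          hpt₂I.integrableOn hpt₂I.integrableOn]
    linarith
  -- G ∘ (second coordinate of ψ) does not depend on z₁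
  have hGrep : ∀ z₁ z₂ : ℝ, G (ψ ![z₁, z₂] 1) = G (ψ ![0, z₂] 1) := by
    rcases sign_const hDcont hD_ne with hsgn | hsgn
    · have key : ∀ z₁ z₂ : ℝ, G (ψ ![z₁, z₂] 1) = ∫ x in Set.Iic z₂, qt₂ x := by
        intro z₁ z₂
        have hmono : StrictMono (fun s => ψ ![z₁, s] 1) :=
          strictMono_of_deriv_pos fun t => by rw [(hh z₁ t).deriv]; exact hsgn _
        have himg := image_Iic_of_strictMono hmono (hhsurj z₁) z₂
        show (∫ x in Set.Iic (ψ ![z₁, z₂] 1), pt₂ x) = _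
        rw [← himg, integral_image_eq_integral_abs_deriv_smul measurableSet_Iic
          (fun x (_ : x ∈ Set.Iic z₂) => (hh z₁ x).hasDerivWithinAt)
          ((hhinj z₁).injOn) pt₂]
        refine setIntegral_congr_fun measurableSet_Iic fun x _ => ?_
        rw [smul_eq_mul, mul_comm]
        exact hstar z₁ x
      intro z₁ z₂
      rw [key z₁ z₂, key 0 z₂]
    · have key : ∀ z₁ z₂ : ℝ, G (ψ ![z₁, z₂] 1) = ∫ x in Set.Ici z₂, qt₂ x := by
        intro z₁ z₂
        have hanti : StrictAnti (fun s => ψ ![z₁, s] 1) :=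
          strictAnti_of_deriv_neg fun t => by rw [(hh z₁ t).deriv]; exact hsgn _
        have himg := image_Ici_of_strictAnti hanti (hhsurj z₁) z₂
        show (∫ x in Set.Iic (ψ ![z₁, z₂] 1), pt₂ x) = _
        rw [← himg, integral_image_eq_integral_abs_deriv_smul measurableSet_Ici
          (fun x (_ : x ∈ Set.Ici z₂) => (hh z₁ x).hasDerivWithinAt)
          ((hhinj z₁).injOn) pt₂]
        refine setIntegral_congr_fun measurableSet_Ici fun x _ => ?_
        rw [smul_eq_mul, mul_comm]
        exact hstar z₁ x
      intro z₁ z₂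
      rw [key z₁ z₂, key 0 z₂]
  -- conclude that the second coordinate of ψ only depends on z 1
  set φ₂ : ℝ → ℝ := fun t => ψ ![0, t] 1 with hφ₂def
  have hzeq : ∀ z : Fin 2 → ℝ, z = ![z 0, z 1] := by
    intro z; funext i; fin_cases i <;> simp
  have hψ2rep : ∀ z : Fin 2 → ℝ, ψ z 1 = φ₂ (z 1) := by
    intro z
    have hG := hGrep (z 0) (z 1)
    rw [← hzeq z] at hG
    exact hGmono.injective hG
  have hd10 : ∀ z : Fin 2 → ℝ, fderiv ℝ ψ z (Pi.single 0 1) 1 = 0 := by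
    intro z
    apply dir_deriv_zero hψd z _ 1 (φ₂ (z 1))
    intro t
    rw [hψ2rep]
    congr 1
    simp
  exact ⟨fun z => ⟨hd01 z, hd10 z⟩, φ₁, φ₂, fun z => ⟨hψ1rep z, hψ2rep z⟩⟩
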